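/- For skeletons φ and ψ on a justified AJM game A: φ ⊑ ψ if and only if φ• ⊆ ψ•, where φ ⊑ ψ means that whenever sab ∈ φ, s' ∈ ψ and sa ≈_A s'a', there exists b' with s'a'b' ∈ ψ and sab ≈_A s'a'b'. -/

import Mathlib

/- Justified AJM games, after Abramsky's game semantics for access control. -/

namespace AJM

inductive Pol where
  | P
  | O
deriving DecidableEq

inductive QA where
  | Q
  | Ans
deriving DecidableEq

def Pol.flip : Pol → Pol
  | .P => .O
  | .O => .P

/-- Well-bracketed strings over moves (condition (p4)). -/
inductive WB {M : Type} (lab : M → Pol × QA) (just : M → Option M) : List M → Prop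
  | nil : WB lab just []
  | wrap (a q : M) (u : List M) : (lab a).2 = QA.Ans → just a = some q →
      WB lab just u → WB lab just (q :: (u ++ [a]))
  | append (u v : List M) : WB lab just u → WB lab just v → WB lab just (u ++ v)

/-- Conditions (p1)–(p5): Opponent starts, alternation, linearity,
well-bracketing, justifiers occur before their moves. -/
def ValidSeq {M : Type} (lab : M → Pol × QA) (just : M → Option M) (s : List M) : Prop :=
  (∀ m, s.head? = some m → (lab m).1 = Pol.O) ∧
  List.Chain' (fun m m' => (lab m).1 ≠ (lab m').1) s ∧
  s.Nodup ∧
  (∃ t, s <+: t ∧ WB lab just t) ∧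
  (∀ s₁ m s₂, s = s₁ ++ m :: s₂ → ∀ m', just m = some m' → m' ∈ s₁)

/-- A justified AJM game (the data). -/
structure Game where
  M : Type
  lab : M → Pol × QA
  just : M → Option M
  pos : Set (List M)
  equiv : List M → List M → Prop

namespace Game

/-- The axioms making the data of a `Game` an actual justified AJM game. -/
structure Valid (A : Game) : Prop where
  just_wf : WellFounded fun m m' : A.M => A.just m' = some m
  just_pol : ∀ m m', A.just m = some m' → (A.lab m).1 ≠ (A.lab m').1
  just_qa : ∀ m m', A.just m = some m' → (A.lab m).2 = QA.Ans → (A.lab m').2 = QA.Q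
  ans_justified : ∀ m, (A.lab m).2 = QA.Ans → A.just m ≠ none
  pos_nonempty : A.pos.Nonempty
  pos_prefix_closed : ∀ s t : List A.M, s <+: t → t ∈ A.pos → s ∈ A.pos
  pos_valid : ∀ s ∈ A.pos, ValidSeq A.lab A.just s
  equiv_mem : ∀ s t, A.equiv s t → s ∈ A.pos ∧ t ∈ A.pos
  equiv_refl : ∀ s ∈ A.pos, A.equiv s s
  equiv_symm : ∀ s t, A.equiv s t → A.equiv t s
  equiv_trans : ∀ s t u, A.equiv s t → A.equiv t u → A.equiv s u
  equiv_lab : ∀ s t, A.equiv s t → s.map A.lab = t.map A.lab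
  equiv_prefix : ∀ s t s' t', A.equiv s t → s' <+: s → t' <+: t →
      s'.length = t'.length → A.equiv s' t'
  equiv_ext : ∀ s t a, A.equiv s t → s ++ [a] ∈ A.pos → ∃ b, A.equiv (s ++ [a]) (t ++ [b])

/-- A strategy on a game: a non-empty set of even-length positions that is
causally consistent, representation independent and deterministic. -/
structure IsStrategy (A : Game) (σ : Set (List A.M)) : Prop where
  subset_pos : σ ⊆ A.pos
  even_length : ∀ s ∈ σ, Even s.length
  nonempty : σ.Nonempty
  causal : ∀ s a b, s ++ [a, b] ∈ σ → s ∈ σ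
  repind : ∀ s t, s ∈ σ → A.equiv s t → t ∈ σ
  det : ∀ s t a b a' b', s ++ [a, b] ∈ σ → t ++ [a', b'] ∈ σ →
      A.equiv (s ++ [a]) (t ++ [a']) → A.equiv (s ++ [a, b]) (t ++ [a', b'])

/-- A skeleton of a strategy `σ`: a non-empty, causally consistent subset of
`σ` satisfying Uniformization. -/
structure IsSkeletonOf (A : Game) (φ σ : Set (List A.M)) : Prop where
  nonempty : φ.Nonempty
  subset : φ ⊆ σ
  causal : ∀ s a b, s ++ [a, b] ∈ φ → s ∈ φ
  uniformization : ∀ s a b, s ++ [a, b] ∈ σ → s ∈ φ → ∃! b', s ++ [a, b'] ∈ φ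

/-- A skeleton in the abstract sense (independently of any strategy):
a non-empty, causally consistent set of even-length positions satisfying
Functional Determinacy and Functional Representation Independence. -/
structure IsSkeleton (A : Game) (φ : Set (List A.M)) : Prop where
  subset_pos : φ ⊆ A.pos
  even_length : ∀ s ∈ φ, Even s.length
  nonempty : φ.Nonempty
  causal : ∀ s a b, s ++ [a, b] ∈ φ → s ∈ φ
  funDet : ∀ s a b c, s ++ [a, b] ∈ φ → s ++ [a, c] ∈ φ → b = c
  funRepInd : ∀ s t a b a', s ++ [a, b] ∈ φ → t ∈ φ →
      A.equiv (s ++ [a]) (t ++ [a']) →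
      ∃! b', t ++ [a', b'] ∈ φ ∧ A.equiv (s ++ [a, b]) (t ++ [a', b'])

/-- `φ• = { t | ∃ s ∈ φ, s ≈_A t }`, the saturation of `φ` under `≈_A`. -/
def dot (A : Game) (φ : Set (List A.M)) : Set (List A.M) :=
  {t | ∃ s ∈ φ, A.equiv s t}

/-- The preorder `φ ⊑ ψ` on skeletons. -/
def Subeq (A : Game) (φ ψ : Set (List A.M)) : Prop :=
  ∀ s a b s' a', s ++ [a, b] ∈ φ → s' ∈ ψ → A.equiv (s ++ [a]) (s' ++ [a']) →
    ∃ b', s' ++ [a', b'] ∈ ψ ∧ A.equiv (s ++ [a, b]) (s' ++ [a', b'])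

end Game

end AJM

/-!
Two positions are `≈_A`-equivalent only if they have the same length, and the equivalence is
inherited by equal-length prefixes. So if `φ• ⊆ ψ•`, a play `sab ∈ φ` is matched by some
`ucd ∈ ψ` with `sa ≈ uc`, and Functional Representation Independence of `ψ` transports the
answer `d` to any `s'a' ≈ sa` with `s' ∈ ψ`. Conversely, `φ ⊑ ψ` lets one copy every play of
`φ` into `ψ`, two moves at a time, starting from `[] ∈ ψ`; hence `φ ⊆ ψ•`, and so `φ• ⊆ ψ•`.
-/

namespace List

variable {α : Type*}

theorem exists_eq_append_pair_of_length_eq_add_two {l : List α} {n : ℕ}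
    (h : l.length = n + 2) : ∃ l₀ a b, l = l₀ ++ [a, b] ∧ l₀.length = n := by
  obtain ⟨a, b, hab⟩ := length_eq_two.mp (show (l.drop n).length = 2 by simp [h])
  exact ⟨l.take n, a, b, by rw [← hab, take_append_drop], by simp [h]⟩

theorem even_length_induction {P : List α → Prop} (nil : P [])
    (append_pair : ∀ s a b, P s → P (s ++ [a, b])) :
    ∀ l : List α, Even l.length → P l := by
  rintro l ⟨n, hn⟩
  induction n generalizing l with
  | zero => rwa [length_eq_zero_iff.mp hn]
  | succ n ih =>
    obtain ⟨l₀, a, b, rfl, hl₀⟩ := exists_eq_append_pair_of_length_eq_add_two (l := l) (n := n + n)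
      (by omega)
    exact append_pair l₀ a b (ih l₀ hl₀)

end List

namespace AJM.Game

variable {A : Game} {φ ψ : Set (List A.M)}

theorem Valid.length_eq_of_equiv (hA : A.Valid) {s t : List A.M} (h : A.equiv s t) :
    s.length = t.length := by
  simpa using congrArg List.length (hA.equiv_lab s t h)

theorem Valid.nil_mem_pos (hA : A.Valid) : [] ∈ A.pos := by
  obtain ⟨w, hw⟩ := hA.pos_nonempty
  exact hA.pos_prefix_closed [] w List.nil_prefix hw

theorem Valid.exists_equiv_append_of_equiv_append_pair (hA : A.Valid) {s u : List A.M}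
    {a b : A.M} (h : A.equiv (s ++ [a, b]) u) :
    ∃ u₀ c d, u = u₀ ++ [c, d] ∧ A.equiv (s ++ [a]) (u₀ ++ [c]) := by
  obtain ⟨u₀, c, d, rfl, hu₀⟩ := List.exists_eq_append_pair_of_length_eq_add_two
    (by simpa using (hA.length_eq_of_equiv h).symm)
  refine ⟨u₀, c, d, rfl, hA.equiv_prefix _ _ _ _ h ⟨[b], by simp⟩ ⟨[d], by simp⟩ ?_⟩
  simp [hu₀]

theorem IsSkeleton.nil_mem (hφ : IsSkeleton A φ) : [] ∈ φ := by
  obtain ⟨s, hs⟩ := hφ.nonempty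
  refine List.even_length_induction (P := fun s => s ∈ φ → [] ∈ φ) id ?_ s
    (hφ.even_length s hs) hs
  exact fun s a b ih hsab => ih (hφ.causal s a b hsab)

theorem mem_dot_of_mem (hA : A.Valid) (hφ : φ ⊆ A.pos) {s : List A.M} (hs : s ∈ φ) :
    s ∈ dot A φ :=
  ⟨s, hs, hA.equiv_refl s (hφ hs)⟩

theorem dot_subset_dot_iff (hA : A.Valid) (hφ : φ ⊆ A.pos) :
    dot A φ ⊆ dot A ψ ↔ φ ⊆ dot A ψ := by
  refine ⟨fun h s hs => h (mem_dot_of_mem hA hφ hs), ?_⟩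
  rintro h t ⟨s, hs, hst⟩
  obtain ⟨u, hu, hus⟩ := h hs
  exact ⟨u, hu, hA.equiv_trans _ _ _ hus hst⟩

theorem Subeq.subset_dot (hA : A.Valid) (hφ : IsSkeleton A φ) (hψ : IsSkeleton A ψ)
    (h : Subeq A φ ψ) : φ ⊆ dot A ψ := by
  intro s hs
  refine List.even_length_induction (P := fun s => s ∈ φ → s ∈ dot A ψ)
    (fun _ => mem_dot_of_mem hA hψ.subset_pos hψ.nil_mem) ?_ s (hφ.even_length s hs) hs
  intro t a b ih htab
  obtain ⟨u, hu, hut⟩ := ih (hφ.causal t a b htab)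
  have hta : t ++ [a] ∈ A.pos :=
    hA.pos_prefix_closed _ _ ⟨[b], by simp⟩ (hφ.subset_pos htab)
  obtain ⟨a', ha'⟩ := hA.equiv_ext t u a (hA.equiv_symm _ _ hut) hta
  obtain ⟨b', hb', hb'e⟩ := h t a b u a' htab hu ha'
  exact ⟨u ++ [a', b'], hb', hA.equiv_symm _ _ hb'e⟩

theorem subeq_of_subset_dot (hA : A.Valid) (hψ : IsSkeleton A ψ) (h : φ ⊆ dot A ψ) :
    Subeq A φ ψ := by
  intro s a b s' a' hs hs' he
  obtain ⟨u, hu, hus⟩ := h hs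
  have e := hA.equiv_symm _ _ hus
  obtain ⟨u₀, c, d, rfl, hpre⟩ := hA.exists_equiv_append_of_equiv_append_pair e
  obtain ⟨b', ⟨hb', hb'e⟩, -⟩ :=
    hψ.funRepInd u₀ s' c d a' hu hs' (hA.equiv_trans _ _ _ (hA.equiv_symm _ _ hpre) he)
  exact ⟨b', hb', hA.equiv_trans _ _ _ e hb'e⟩

end AJM.Game

open AJM Game in
/-- For skeletons `φ`, `ψ` on `A`: `φ ⊑ ψ` iff `φ• ⊆ ψ•`. -/
theorem subeq_iff_dot_subset (A : Game) (hA : A.Valid)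
    (φ ψ : Set (List A.M)) (hφ : IsSkeleton A φ) (hψ : IsSkeleton A ψ) :
    Subeq A φ ψ ↔ dot A φ ⊆ dot A ψ := by
  rw [dot_subset_dot_iff hA hφ.subset_pos]
  exact ⟨Subeq.subset_dot hA hφ hψ, subeq_of_subset_dot hA hψ⟩
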